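/- For every real number ω, the improper integral ∫_{−∞}^{∞} (2/cosh² σ)·cos(ωσ) dσ converges and equals 2πω / sinh(πω/2) when ω ≠ 0, and equals 4 when ω = 0. -/

import Mathlib

open Real MeasureTheory Set

noncomputable section

namespace Stmt4Aux

def phi (σ : ℝ) : ℝ := (1 + Real.exp (-2 * σ))⁻¹

def phi' (σ : ℝ) : ℝ := 2 * Real.exp (-2 * σ) / (1 + Real.exp (-2 * σ)) ^ 2

lemma one_add_pos (σ : ℝ) : 0 < 1 + Real.exp (-2 * σ) := by positivity

lemma hasDerivAt_phi (σ : ℝ) : HasDerivAt phi (phi' σ) σ := by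
  have hlin : HasDerivAt (fun σ : ℝ => -2 * σ) (-2) σ := by
    simpa using (hasDerivAt_id σ).const_mul (-2)
  have hexp : HasDerivAt (fun σ : ℝ => Real.exp (-2 * σ)) (Real.exp (-2 * σ) * (-2)) σ :=
    hlin.exp
  have hadd : HasDerivAt (fun σ : ℝ => 1 + Real.exp (-2 * σ)) (Real.exp (-2 * σ) * (-2)) σ :=
    hexp.const_add 1
  have hinv := hadd.inv (ne_of_gt (one_add_pos σ))
  refine hinv.congr_deriv ?_
  unfold phi'
  field_simp

lemma strictMono_phi : StrictMono phi := by
  intro a b hab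
  unfold phi
  have h : Real.exp (-2 * b) < Real.exp (-2 * a) := Real.exp_lt_exp.2 (by linarith)
  have hb := Real.exp_pos (-2 * b)
  exact inv_strictAnti₀ (by linarith) (by linarith)

lemma phi_pos (σ : ℝ) : 0 < phi σ := by unfold phi; positivity

lemma phi_lt_one (σ : ℝ) : phi σ < 1 := by
  unfold phi
  have := Real.exp_pos (-2 * σ)
  rw [inv_lt_one_iff₀]
  right
  linarith

lemma phi_image : phi '' univ = Ioo 0 1 := by
  ext t
  simp only [image_univ, mem_range, mem_Ioo]
  constructor
  · rintro ⟨σ, rfl⟩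
    exact ⟨phi_pos σ, phi_lt_one σ⟩
  · rintro ⟨h0, h1⟩
    refine ⟨(1 / 2) * Real.log (t / (1 - t)), ?_⟩
    have h1t : 0 < 1 - t := by linarith
    unfold phi
    rw [show -2 * ((1 / 2) * Real.log (t / (1 - t))) = Real.log ((t / (1 - t))⁻¹) by
      rw [Real.log_inv]; ring]
    rw [Real.exp_log (by positivity)]
    field_simp
    ring

lemma one_sub_phi (σ : ℝ) :
    1 - phi σ = Real.exp (-2 * σ) / (1 + Real.exp (-2 * σ)) := by
  have := one_add_pos σ
  unfold phi
  field_simp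
  ring

lemma log_phi_sub (σ : ℝ) :
    Real.log (phi σ) - Real.log (1 - phi σ) = 2 * σ := by
  have hE := Real.exp_pos (-2 * σ)
  have h1E := one_add_pos σ
  rw [one_sub_phi]
  unfold phi
  rw [Real.log_inv, Real.log_div (ne_of_gt hE) (ne_of_gt h1E), Real.log_exp]
  ring

lemma phi'_eq (σ : ℝ) : phi' σ = (1 / 2) / Real.cosh σ ^ 2 := by
  have ha := Real.exp_pos σ
  have hne : Real.exp σ ≠ 0 := ne_of_gt ha
  unfold phi'
  rw [Real.cosh_eq]
  have h2 : Real.exp (-2 * σ) = ((Real.exp σ)⁻¹) ^ 2 := by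
    rw [← Real.exp_neg, ← Real.exp_nat_mul]
    norm_num
  rw [h2, Real.exp_neg]
  field_simp

lemma phi'_pos (σ : ℝ) : 0 < phi' σ := by
  unfold phi'
  positivity

lemma main (ω : ℝ) :
    Integrable (fun σ : ℝ => 2 / (Real.cosh σ) ^ 2 * Real.cos (ω * σ)) ∧
    (∫ σ : ℝ, 2 / (Real.cosh σ) ^ 2 * Real.cos (ω * σ))
      = (4 * Complex.betaIntegral (1 + Complex.I * ω / 2) (1 - Complex.I * ω / 2)).re := by
  set z : ℂ := Complex.I * ω / 2 with hz
  set g : ℝ → ℂ := fun x : ℝ => (x : ℂ) ^ ((1 + z) - 1) * (1 - (x : ℂ)) ^ ((1 - z) - 1) with hg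
  set C : ℝ → ℂ := fun σ : ℝ =>
    ((2 / Real.cosh σ ^ 2 : ℝ) : ℂ) * Complex.exp (Complex.I * ω * σ) with hC
  have hzre : z.re = 0 := by
    simp [hz, Complex.div_re]
  have hre1 : (0 : ℝ) < (1 + z).re := by simp [Complex.add_re, hzre]
  have hre2 : (0 : ℝ) < (1 - z).re := by simp [Complex.sub_re, hzre]
  have hpt : ∀ σ : ℝ, |phi' σ| • g (phi σ) = (4 : ℂ)⁻¹ * C σ := by
    intro σ
    have hφ0 := phi_pos σ
    have hφ1 := phi_lt_one σ
    have h1φ : (0:ℝ) < 1 - phi σ := by linarith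
    have hgφ : g (phi σ) = Complex.exp (Complex.I * ω * σ) := by
      have hne1 : ((phi σ : ℝ) : ℂ) ≠ 0 := Complex.ofReal_ne_zero.2 (ne_of_gt hφ0)
      have hcast : (1 - ((phi σ : ℝ) : ℂ)) = (((1 - phi σ : ℝ)) : ℂ) := by push_cast; ring
      have hne2 : (1 - ((phi σ : ℝ) : ℂ)) ≠ 0 := by
        rw [hcast]; exact Complex.ofReal_ne_zero.2 (ne_of_gt h1φ)
      simp only [hg]
      rw [Complex.cpow_def_of_ne_zero hne1, Complex.cpow_def_of_ne_zero hne2,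
        ← Complex.exp_add, hcast, ← Complex.ofReal_log hφ0.le, ← Complex.ofReal_log h1φ.le]
      congr 1
      have h12 : ((Real.log (phi σ) : ℂ)) - ((Real.log (1 - phi σ) : ℂ)) = ((2 * σ : ℝ) : ℂ) := by
        rw [← Complex.ofReal_sub, log_phi_sub]
      have hrw : ((Real.log (phi σ) : ℂ)) * ((1 + z) - 1)
          + ((Real.log (1 - phi σ) : ℂ)) * ((1 - z) - 1)
          = (((Real.log (phi σ) : ℂ)) - ((Real.log (1 - phi σ) : ℂ))) * z := by ring
      rw [hrw, h12, hz]
      push_cast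
      ring
    rw [abs_of_pos (phi'_pos σ), hgφ, Complex.real_smul, phi'_eq]
    simp only [hC]
    push_cast
    ring
  have hderiv : ∀ x ∈ (univ : Set ℝ), HasDerivWithinAt phi (phi' x) univ x :=
    fun x _ => (hasDerivAt_phi x).hasDerivWithinAt
  have hinj : InjOn phi univ := strictMono_phi.injective.injOn
  have hIoo_g : IntegrableOn g (Ioo (0:ℝ) 1) := by
    have h := Complex.betaIntegral_convergent hre1 hre2
    have h2 : IntegrableOn g (Ioc (0:ℝ) 1) := by
      rw [intervalIntegrable_iff_integrableOn_Ioc_of_le zero_le_one] at h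
      exact h
    exact h2.mono_set Ioo_subset_Ioc_self
  have hiff := integrableOn_image_iff_integrableOn_abs_deriv_smul MeasurableSet.univ hderiv hinj g
  rw [phi_image] at hiff
  have hint_smul : Integrable (fun σ => |phi' σ| • g (phi σ)) := by
    have := hiff.1 hIoo_g
    rwa [integrableOn_univ] at this
  have hCint : Integrable C := by
    have hCfun : C = fun σ => (4:ℂ) * (|phi' σ| • g (phi σ)) := by
      funext σ; rw [hpt σ]; ring
    rw [hCfun]
    exact hint_smul.const_mul 4
  have hsub := integral_image_eq_integral_abs_deriv_smul MeasurableSet.univ hderiv hinj g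
  rw [phi_image] at hsub
  have hCval : ∫ σ : ℝ, C σ = 4 * Complex.betaIntegral (1 + z) (1 - z) := by
    calc ∫ σ : ℝ, C σ = ∫ σ : ℝ, (4:ℂ) * (|phi' σ| • g (phi σ)) := by
          congr 1; funext σ; rw [hpt σ]; ring
      _ = 4 * ∫ σ : ℝ, |phi' σ| • g (phi σ) := MeasureTheory.integral_const_mul _ _
      _ = 4 * ∫ t in Ioo (0:ℝ) 1, g t := by
          rw [hsub, MeasureTheory.setIntegral_univ]
      _ = 4 * Complex.betaIntegral (1 + z) (1 - z) := by
          rw [Complex.betaIntegral, intervalIntegral.integral_of_le zero_le_one,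
            MeasureTheory.integral_Ioc_eq_integral_Ioo]
  have hL : (fun σ : ℝ => 2 / Real.cosh σ ^ 2 * Real.cos (ω * σ)) = fun σ => (C σ).re := by
    funext σ
    simp only [hC]
    rw [show Complex.I * ω * σ = ((ω * σ : ℝ) : ℂ) * Complex.I by push_cast; ring,
      Complex.re_ofReal_mul, Complex.exp_ofReal_mul_I_re]
  constructor
  · rw [hL]
    simpa only [RCLike.re_to_complex] using hCint.re
  · rw [hL, ← hCval]
    simpa only [RCLike.re_to_complex] using integral_re hCint

end Stmt4Aux

open Stmt4Aux in
theorem stmt_4 (ω : ℝ) :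
    Integrable (fun σ : ℝ => 2 / (cosh σ) ^ 2 * cos (ω * σ)) ∧
    (ω ≠ 0 → ∫ σ : ℝ, 2 / (cosh σ) ^ 2 * cos (ω * σ) = 2 * π * ω / sinh (π * ω / 2)) ∧
    (ω = 0 → ∫ σ : ℝ, 2 / (cosh σ) ^ 2 * cos (ω * σ) = 4) := by
  obtain ⟨hint, hval⟩ := Stmt4Aux.main ω
  refine ⟨hint, ?_, ?_⟩
  · intro hω
    rw [hval]
    set z : ℂ := Complex.I * ω / 2 with hz
    have hzre : z.re = 0 := by simp [hz, Complex.div_re]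
    have hre1 : (0 : ℝ) < (1 + z).re := by simp [Complex.add_re, hzre]
    have hre2 : (0 : ℝ) < (1 - z).re := by simp [Complex.sub_re, hzre]
    have hz0 : z ≠ 0 := by
      simp only [hz]
      intro h
      apply hω
      have h2 := congrArg Complex.im h
      simp [Complex.div_im] at h2
      exact h2
    have hβ := Complex.Gamma_mul_Gamma_eq_betaIntegral hre1 hre2
    rw [show (1 + z) + (1 - z) = 2 by ring] at hβ
    have hΓ2 : Complex.Gamma 2 = 1 := by
      simpa using Complex.Gamma_nat_eq_factorial 1
    rw [hΓ2, one_mul] at hβ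
    rw [← hβ, show (1:ℂ) + z = z + 1 by ring, Complex.Gamma_add_one z hz0, mul_assoc,
      Complex.Gamma_mul_Gamma_one_sub]
    have hsin : Complex.sin ((π:ℂ) * z) = ((Real.sinh (π * ω / 2) : ℝ) : ℂ) * Complex.I := by
      rw [show (π:ℂ) * z = ((π * ω / 2 : ℝ) : ℂ) * Complex.I by rw [hz]; push_cast; ring,
        Complex.sin_mul_I, Complex.ofReal_sinh]
    rw [hsin]
    have hs0 : Real.sinh (π * ω / 2) ≠ 0 := Real.sinh_ne_zero.2 (by
      simp [Real.pi_ne_zero, hω])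
    have hkey : (4:ℂ) * (z * ((π:ℂ) / (((Real.sinh (π * ω / 2) : ℝ) : ℂ) * Complex.I)))
        = ((2 * π * ω / Real.sinh (π * ω / 2) : ℝ) : ℂ) := by
      have hsC : ((Real.sinh (π * ω / 2) : ℝ) : ℂ) ≠ 0 := Complex.ofReal_ne_zero.2 hs0
      rw [hz]
      push_cast
      field_simp
      ring_nf
    rw [hkey, Complex.ofReal_re]
  · intro hω
    subst hω
    rw [hval]
    norm_num
    rw [Complex.betaIntegral_eval_one_right (by norm_num : (0:ℝ) < (1:ℂ).re)]
    norm_num
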